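/- Let B_3 be the book graph with three pages, i.e., the melon graph with exactly four constituent paths, one of length one and the other three of length exactly three. Then the representation number of B_3 equals 3. -/

import Mathlib

open SimpleGraph

variable {V : Type*}

/-- Two letters `a` and `b` alternate in the word `w`. -/
def Alternates [DecidableEq V] (w : List V) (a b : V) : Prop :=
  (w.filter fun x => decide (x = a ∨ x = b)).Chain' (· ≠ ·)

/-- The word `w` represents the simple graph `G`. -/
def Represents [DecidableEq V] (G : SimpleGraph V) (w : List V) : Prop :=
  (∀ v : V, v ∈ w) ∧ ∀ a b : V, a ≠ b → (G.Adj a b ↔ Alternates w a b)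

/-- `G` is representable by a `k`-uniform word. -/
def KWordRepresentable [DecidableEq V] (G : SimpleGraph V) (k : ℕ) : Prop :=
  ∃ w : List V, (∀ v : V, w.count v = k) ∧ Represents G w

def WordRepresentable [DecidableEq V] (G : SimpleGraph V) : Prop :=
  ∃ w : List V, Represents G w

/-- The representation number of `G`. -/
noncomputable def repNum [DecidableEq V] (G : SimpleGraph V) : ℕ :=
  sInf {k | KWordRepresentable G k}

/-- `G` is permutationally `k`-representable. -/
def PermRepresentable [DecidableEq V] (G : SimpleGraph V) (k : ℕ) : Prop :=
  ∃ ps : Fin k → List V, (∀ i, ∀ v : V, (ps i).count v = 1) ∧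
    Represents G (List.ofFn ps).flatten

/-- The permutation-representation number of `G`. -/
noncomputable def permRepNum [DecidableEq V] (G : SimpleGraph V) : ℕ :=
  sInf {k | PermRepresentable G k}

/-- `G` is a melon graph with `m` constituent paths `P i` joining the endpoints `x` and `y`. -/
structure IsMelon (G : SimpleGraph V) (m : ℕ) (x y : V)
    (P : Fin m → G.Walk x y) : Prop where
  one_le_m : 1 ≤ m
  ne : x ≠ y
  isPath : ∀ i, (P i).IsPath
  one_le_length : ∀ i, 1 ≤ (P i).length
  internallyDisjoint : ∀ i j, i ≠ j →
    ∀ v, v ∈ (P i).support → v ∈ (P j).support → v = x ∨ v = y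
  support_cover : ∀ v, ∃ i, v ∈ (P i).support
  edge_cover : ∀ e, e ∈ G.edgeSet → ∃ i, e ∈ (P i).edges
  at_most_one_short : ∀ i j, (P i).length = 1 → (P j).length = 1 → i = j

/-- `G` is a melon graph. -/
def IsMelonGraph (G : SimpleGraph V) : Prop :=
  ∃ (m : ℕ) (x y : V) (P : Fin m → G.Walk x y), IsMelon G m x y P

/-- A transitive orientation of the edges of `G`, i.e. `G` is a comparability graph. -/
def HasTransitiveOrientation (G : SimpleGraph V) : Prop :=
  ∃ r : V → V → Prop, (∀ a b, r a b → G.Adj a b) ∧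
    (∀ a b, G.Adj a b → (r a b ↔ ¬ r b a)) ∧
    (∀ a b c, r a b → r b c → r a c)

set_option maxHeartbeats 2000000
set_option linter.unusedVariables false
set_option linter.unreachableTactic false
set_option linter.unusedTactic false

def chainNe {V : Type*} [DecidableEq V] : List V → Bool
  | [] => true
  | [_] => true
  | (a :: b :: t) => (a ≠ b : Bool) && chainNe (b :: t)

lemma chainNe_iff {V : Type*} [DecidableEq V] : ∀ (l : List V), chainNe l = true ↔ l.Chain' (· ≠ ·)
  | [] => by simp [chainNe, List.Chain']
  | [a] => by simp [chainNe, List.Chain']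
  | (a :: b :: t) => by
    rw [List.Chain', List.isChain_cons_cons]
    simp [chainNe, chainNe_iff (b :: t), List.Chain']

instance {V : Type*} [DecidableEq V] (w : List V) (a b : V) : Decidable (Alternates w a b) :=
  decidable_of_iff (chainNe (w.filter fun x => decide (x = a ∨ x = b)) = true) (chainNe_iff _)

def badj : Fin 8 → Fin 8 → Bool := fun u v =>
  decide ((u,v) ∈ [((0:Fin 8),(1:Fin 8)),(1,0),(0,2),(2,0),(2,3),(3,2),(1,3),(3,1),
    (0,4),(4,0),(4,5),(5,4),(1,5),(5,1),(0,6),(6,0),(6,7),(7,6),(1,7),(7,1)])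

def B3 : SimpleGraph (Fin 8) where
  Adj u v := badj u v = true
  symm := by constructor; intro u v h; revert h; revert u v; decide
  loopless := by constructor; intro u h; revert h; revert u; decide

instance : DecidableRel B3.Adj := fun u v => inferInstanceAs (Decidable (badj u v = true))

def myw : List (Fin 8) := [5,0,3,4,2,7,1,6,7,0,5,6,4,3,1,2,3,0,7,6,2,5,1,4]


def Crossing (p1 q1 p2 q2 : ℕ) : Prop :=
  (p1 < p2 ∧ p2 < q1 ∧ q1 < q2) ∨ (p2 < p1 ∧ p1 < q2 ∧ q2 < q1)

/-- Classify the `a`-chord of a page. -/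
lemma pageA {px py qx qy a1 a2 : ℕ}
    (hxy1 : px < py) (hxy2 : py < qx) (hxy3 : qx < qy)
    (ha : a1 < a2)
    (cAX : Crossing px qx a1 a2) (nAY : ¬ Crossing py qy a1 a2)
    (d1 : a1 ≠ py) (d2 : a2 ≠ py) (d3 : a1 ≠ qy) (d4 : a2 ≠ qy) :
    (a1 < px ∧ px < a2 ∧ a2 < py) ∨ (px < a1 ∧ a1 < py ∧ qy < a2) ∨
      (py < a1 ∧ a1 < qx ∧ qx < a2 ∧ a2 < qy) := by
  unfold Crossing at *; omega

/-- Classify the `b`-chord of a page. -/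
lemma pageB {px py qx qy b1 b2 : ℕ}
    (hxy1 : px < py) (hxy2 : py < qx) (hxy3 : qx < qy)
    (hb : b1 < b2)
    (cBY : Crossing py qy b1 b2) (nBX : ¬ Crossing px qx b1 b2)
    (d1 : b1 ≠ px) (d2 : b2 ≠ px) (d3 : b1 ≠ qx) (d4 : b2 ≠ qx) :
    (b1 < px ∧ qx < b2 ∧ b2 < qy) ∨ (px < b1 ∧ b1 < py ∧ py < b2 ∧ b2 < qx) ∨
      (qx < b1 ∧ b1 < qy ∧ qy < b2) := by
  unfold Crossing at *; omega


lemma pairL {px py qx qy a1 a2 b1 b2 c1 c2 e1 e2 : ℕ}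
    (h0 : px < py) (h1 : py < qx) (h2 : qx < qy) (tAi : (a1 < px ∧ px < a2 ∧ a2 < py) ∨ (px < a1 ∧ a1 < py ∧ qy < a2)) (tBi : (b1 < px ∧ qx < b2 ∧ b2 < qy) ∨ (px < b1 ∧ b1 < py ∧ py < b2 ∧ b2 < qx) ∨ (qx < b1 ∧ b1 < qy ∧ qy < b2)) (ci : Crossing a1 a2 b1 b2) (tAj : (c1 < px ∧ px < c2 ∧ c2 < py) ∨ (px < c1 ∧ c1 < py ∧ qy < c2)) (tBj : (e1 < px ∧ qx < e2 ∧ e2 < qy) ∨ (px < e1 ∧ e1 < py ∧ py < e2 ∧ e2 < qx) ∨ (qx < e1 ∧ e1 < qy ∧ qy < e2)) (cj : Crossing c1 c2 e1 e2) (nAA : ¬ Crossing a1 a2 c1 c2) (nBB : ¬ Crossing b1 b2 e1 e2) (nAB : ¬ Crossing a1 a2 e1 e2) (nBA : ¬ Crossing c1 c2 b1 b2) (da1c1 : a1 ≠ c1) (da1c2 : a1 ≠ c2) (da1e1 : a1 ≠ e1) (da1e2 : a1 ≠ e2) (da2c1 : a2 ≠ c1) (da2c2 : a2 ≠ c2)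 (da2e1 : a2 ≠ e1) (da2e2 : a2 ≠ e2) (db1c1 : b1 ≠ c1) (db1c2 : b1 ≠ c2) (db1e1 : b1 ≠ e1) (db1e2 : b1 ≠ e2) (db2c1 : b2 ≠ c1) (db2c2 : b2 ≠ c2) (db2e1 : b2 ≠ e1) (db2e2 : b2 ≠ e2) (da1b1 : a1 ≠ b1) (da1b2 : a1 ≠ b2) (da2b1 : a2 ≠ b1) (da2b2 : a2 ≠ b2) (dc1e1 : c1 ≠ e1) (dc1e2 : c1 ≠ e2) (dc2e1 : c2 ≠ e1) (dc2e2 : c2 ≠ e2) : False := by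
  simp only [Crossing] at ci cj nAA nBB nAB nBA
  rcases tAi with tAi|tAi
  · rcases tBi with tBi|tBi|tBi
    · rcases tAj with tAj|tAj
      · rcases tBj with tBj|tBj|tBj
        · clear da1c2 da1e2 da2c1 da2e1 da2e2 db1c2 db1e2 db2c1 db2c2 db2e1 da1b2 da2b1 da2b2 dc1e2 dc2e1 dc2e2
          omega
        · clear da1c2 da1e1 da1e2 da2c1 da2e2 db1c2 db1e1 db1e2 db2c1 db2c2 db2e1 db2e2 da1b2 da2b1 da2b2 dc1e1 dc1e2 dc2e2
          omega
        · clear da1c2 da1e1 da1e2 da2c1 da2e1 da2e2 db1c2 db1e1 db1e2 db2c1 db2c2 db2e2 da1b2 da2b1 da2b2 dc1e1 dc1e2 dc2e1 dc2e2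
          omega
      · rcases tBj with tBj|tBj|tBj
        · clear da1c1 da1c2 da1e2 da2c2 da2e1 da2e2 db1c1 db1c2 db1e2 db2c1 db2c2 db2e1 da1b2 da2b1 da2b2 dc1e1 dc1e2 dc2e1 dc2e2
          omega
        · clear da1c1 da1c2 da1e1 da1e2 da2c2 da2e2 db1c1 db1c2 db1e1 db1e2 db2c1 db2c2 db2e1 db2e2 da1b2 da2b1 da2b2 dc1e2 dc2e1 dc2e2
          omega
        · clear da1c1 da1c2 da1e1 da1e2 da2c2 da2e1 da2e2 db1c1 db1c2 db1e1 db1e2 db2c1 db2c2 db2e2 da1b2 da2b1 da2b2 dc1e1 dc1e2 dc2e1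
          omega
    · rcases tAj with tAj|tAj
      · rcases tBj with tBj|tBj|tBj
        · clear da1c2 da1e2 da2c1 da2e1 da2e2 db1c1 db1e1 db1e2 db2c1 db2c2 db2e1 db2e2 da1b1 da1b2 da2b2 dc1e2 dc2e1 dc2e2
          omega
        · clear da1c2 da1e1 da1e2 da2c1 da2e2 db1c1 db1e2 db2c1 db2c2 db2e1 da1b1 da1b2 da2b2 dc1e1 dc1e2 dc2e2
          omega
        · clear da1c2 da1e1 da1e2 da2c1 da2e1 da2e2 db1c1 db1e1 db1e2 db2c1 db2c2 db2e1 db2e2 da1b1 da1b2 da2b2 dc1e1 dc1e2 dc2e1 dc2e2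
          omega
      · rcases tBj with tBj|tBj|tBj
        · clear da1c1 da1c2 da1e2 da2c2 da2e1 da2e2 db1c2 db1e1 db1e2 db2c1 db2c2 db2e1 db2e2 da1b1 da1b2 da2b2 dc1e1 dc1e2 dc2e1 dc2e2
          omega
        · clear da1c1 da1c2 da1e1 da1e2 da2c2 da2e2 db1c2 db1e2 db2c1 db2c2 db2e1 da1b1 da1b2 da2b2 dc1e2 dc2e1 dc2e2
          omega
        · clear da1c1 da1c2 da1e1 da1e2 da2c2 da2e1 da2e2 db1c2 db1e1 db1e2 db2c1 db2c2 db2e1 db2e2 da1b1 da1b2 da2b2 dc1e1 dc1e2 dc2e1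
          omega
    · rcases tAj with tAj|tAj
      · rcases tBj with tBj|tBj|tBj
        · clear da1c2 da1e2 da2c1 da2e1 da2e2 db1c1 db1c2 db1e1 db2c1 db2c2 db2e1 db2e2 da1b1 da1b2 da2b1 da2b2 dc1e2 dc2e1 dc2e2
          omega
        · clear da1c2 da1e1 da1e2 da2c1 da2e2 db1c1 db1c2 db1e1 db1e2 db2c1 db2c2 db2e1 db2e2 da1b1 da1b2 da2b1 da2b2 dc1e1 dc1e2 dc2e2
          omega
        · clear da1c2 da1e1 da1e2 da2c1 da2e1 da2e2 db1c1 db1c2 db1e2 db2c1 db2c2 db2e1 da1b1 da1b2 da2b1 da2b2 dc1e1 dc1e2 dc2e1 dc2e2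
          omega
      · rcases tBj with tBj|tBj|tBj
        · clear da1c1 da1c2 da1e2 da2c2 da2e1 da2e2 db1c1 db1c2 db1e1 db2c1 db2e1 db2e2 da1b1 da1b2 da2b1 da2b2 dc1e1 dc1e2 dc2e1 dc2e2
          omega
        · clear da1c1 da1c2 da1e1 da1e2 da2c2 da2e2 db1c1 db1c2 db1e1 db1e2 db2c1 db2e1 db2e2 da1b1 da1b2 da2b1 da2b2 dc1e2 dc2e1 dc2e2
          omega
        · clear da1c1 da1c2 da1e1 da1e2 da2c2 da2e1 da2e2 db1c1 db1c2 db1e2 db2c1 db2e1 da1b1 da1b2 da2b1 da2b2 dc1e1 dc1e2 dc2e1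
          omega
  · rcases tBi with tBi|tBi|tBi
    · rcases tAj with tAj|tAj
      · rcases tBj with tBj|tBj|tBj
        · clear da1c1 da1e1 da1e2 da2c1 da2c2 da2e1 da2e2 db1c2 db1e2 db2c1 db2c2 db2e1 da1b1 da1b2 da2b1 da2b2 dc1e2 dc2e1 dc2e2
          omega
        · clear da1c1 da1e2 da2c1 da2c2 da2e1 da2e2 db1c2 db1e1 db1e2 db2c1 db2c2 db2e1 db2e2 da1b1 da1b2 da2b1 da2b2 dc1e1 dc1e2 dc2e2
          omega
        · clear da1c1 da1e1 da1e2 da2c1 da2c2 da2e1 db1c2 db1e1 db1e2 db2c1 db2c2 db2e2 da1b1 da1b2 da2b1 da2b2 dc1e1 dc1e2 dc2e1 dc2e2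
          omega
      · rcases tBj with tBj|tBj|tBj
        · clear da1c2 da1e1 da1e2 da2c1 da2e1 da2e2 db1c1 db1c2 db1e2 db2c1 db2c2 db2e1 da1b1 da1b2 da2b1 da2b2 dc1e1 dc1e2 dc2e1 dc2e2
          omega
        · clear da1c2 da1e2 da2c1 da2e1 da2e2 db1c1 db1c2 db1e1 db1e2 db2c1 db2c2 db2e1 db2e2 da1b1 da1b2 da2b1 da2b2 dc1e2 dc2e1 dc2e2
          omega
        · clear da1c2 da1e1 da1e2 da2c1 da2e1 db1c1 db1c2 db1e1 db1e2 db2c1 db2c2 db2e2 da1b1 da1b2 da2b1 da2b2 dc1e1 dc1e2 dc2e1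
          omega
    · rcases tAj with tAj|tAj
      · rcases tBj with tBj|tBj|tBj
        · clear da1c1 da1e1 da1e2 da2c1 da2c2 da2e1 da2e2 db1c1 db1e1 db1e2 db2c1 db2c2 db2e1 db2e2 da1b2 da2b1 da2b2 dc1e2 dc2e1 dc2e2
          omega
        · clear da1c1 da1e2 da2c1 da2c2 da2e1 da2e2 db1c1 db1e2 db2c1 db2c2 db2e1 da1b2 da2b1 da2b2 dc1e1 dc1e2 dc2e2
          omega
        · clear da1c1 da1e1 da1e2 da2c1 da2c2 da2e1 db1c1 db1e1 db1e2 db2c1 db2c2 db2e1 db2e2 da1b2 da2b1 da2b2 dc1e1 dc1e2 dc2e1 dc2e2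
          omega
      · rcases tBj with tBj|tBj|tBj
        · clear da1c2 da1e1 da1e2 da2c1 da2e1 da2e2 db1c2 db1e1 db1e2 db2c1 db2c2 db2e1 db2e2 da1b2 da2b1 da2b2 dc1e1 dc1e2 dc2e1 dc2e2
          omega
        · clear da1c2 da1e2 da2c1 da2e1 da2e2 db1c2 db1e2 db2c1 db2c2 db2e1 da1b2 da2b1 da2b2 dc1e2 dc2e1 dc2e2
          omega
        · clear da1c2 da1e1 da1e2 da2c1 da2e1 db1c2 db1e1 db1e2 db2c1 db2c2 db2e1 db2e2 da1b2 da2b1 da2b2 dc1e1 dc1e2 dc2e1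
          omega
    · rcases tAj with tAj|tAj
      · rcases tBj with tBj|tBj|tBj
        · clear da1c1 da1e1 da1e2 da2c1 da2c2 da2e1 da2e2 db1c1 db1c2 db1e1 db2c1 db2c2 db2e1 db2e2 da1b1 da1b2 da2b1 dc1e2 dc2e1 dc2e2
          omega
        · clear da1c1 da1e2 da2c1 da2c2 da2e1 da2e2 db1c1 db1c2 db1e1 db1e2 db2c1 db2c2 db2e1 db2e2 da1b1 da1b2 da2b1 dc1e1 dc1e2 dc2e2
          omega
        · clear da1c1 da1e1 da1e2 da2c1 da2c2 da2e1 db1c1 db1c2 db1e2 db2c1 db2c2 db2e1 da1b1 da1b2 da2b1 dc1e1 dc1e2 dc2e1 dc2e2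
          omega
      · rcases tBj with tBj|tBj|tBj
        · clear da1c2 da1e1 da1e2 da2c1 da2e1 da2e2 db1c1 db1c2 db1e1 db2c1 db2e1 db2e2 da1b1 da1b2 da2b1 dc1e1 dc1e2 dc2e1 dc2e2
          omega
        · clear da1c2 da1e2 da2c1 da2e1 da2e2 db1c1 db1c2 db1e1 db1e2 db2c1 db2e1 db2e2 da1b1 da1b2 da2b1 dc1e2 dc2e1 dc2e2
          omega
        · clear da1c2 da1e1 da1e2 da2c1 da2e1 db1c1 db1c2 db1e2 db2c1 db2e1 da1b1 da1b2 da2b1 dc1e1 dc1e2 dc2e1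
          omega

lemma pairR {px py qx qy a1 a2 b1 b2 c1 c2 e1 e2 : ℕ}
    (h0 : px < py) (h1 : py < qx) (h2 : qx < qy) (tAi : (py < a1 ∧ a1 < qx ∧ qx < a2 ∧ a2 < qy)) (tBi : (b1 < px ∧ qx < b2 ∧ b2 < qy) ∨ (px < b1 ∧ b1 < py ∧ py < b2 ∧ b2 < qx) ∨ (qx < b1 ∧ b1 < qy ∧ qy < b2)) (ci : Crossing a1 a2 b1 b2) (tAj : (py < c1 ∧ c1 < qx ∧ qx < c2 ∧ c2 < qy)) (tBj : (e1 < px ∧ qx < e2 ∧ e2 < qy) ∨ (px < e1 ∧ e1 < py ∧ py < e2 ∧ e2 < qx) ∨ (qx < e1 ∧ e1 < qy ∧ qy < e2)) (cj : Crossing c1 c2 e1 e2) (nAA : ¬ Crossing a1 a2 c1 c2) (nBB : ¬ Crossing b1 b2 e1 e2) (nAB : ¬ Crossing a1 a2 e1 e2) (nBA : ¬ Crossing c1 c2 b1 b2) (da1c1 : a1 ≠ c1) (da1c2 : a1 ≠ c2) (da1e1 : a1 ≠ e1) (da1e2 : a1 ≠ e2) (da2c1 : a2 ≠ c1) (da2c2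 : a2 ≠ c2) (da2e1 : a2 ≠ e1) (da2e2 : a2 ≠ e2) (db1c1 : b1 ≠ c1) (db1c2 : b1 ≠ c2) (db1e1 : b1 ≠ e1) (db1e2 : b1 ≠ e2) (db2c1 : b2 ≠ c1) (db2c2 : b2 ≠ c2) (db2e1 : b2 ≠ e1) (db2e2 : b2 ≠ e2) (da1b1 : a1 ≠ b1) (da1b2 : a1 ≠ b2) (da2b1 : a2 ≠ b1) (da2b2 : a2 ≠ b2) (dc1e1 : c1 ≠ e1) (dc1e2 : c1 ≠ e2) (dc2e1 : c2 ≠ e1) (dc2e2 : c2 ≠ e2) : False := by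
  simp only [Crossing] at ci cj nAA nBB nAB nBA
  rcases tAi with tAi
  · rcases tBi with tBi|tBi|tBi
    · rcases tAj with tAj
      · rcases tBj with tBj|tBj|tBj
        · clear da1c2 da1e1 da1e2 da2c1 da2e1 db1c1 db1c2 db1e2 db2c1 db2e1 da1b1 da1b2 da2b1 dc1e1 dc1e2 dc2e1
          omega
        · clear da1c2 da1e1 da2c1 da2e1 da2e2 db1c1 db1c2 db1e1 db1e2 db2c1 db2e1 db2e2 da1b1 da1b2 da2b1 dc1e1 dc2e1 dc2e2
          omega
        · clear da1c2 da1e1 da1e2 da2c1 da2e2 db1c1 db1c2 db1e1 db1e2 db2c1 db2e2 da1b1 da1b2 da2b1 dc1e1 dc1e2 dc2e2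
          omega
    · rcases tAj with tAj
      · rcases tBj with tBj|tBj|tBj
        · clear da1c2 da1e1 da1e2 da2c1 da2e1 db1c1 db1c2 db1e1 db1e2 db2c2 db2e1 db2e2 da1b1 da2b1 da2b2 dc1e1 dc1e2 dc2e1
          omega
        · clear da1c2 da1e1 da2c1 da2e1 da2e2 db1c1 db1c2 db1e2 db2c2 db2e1 da1b1 da2b1 da2b2 dc1e1 dc2e1 dc2e2
          omega
        · clear da1c2 da1e1 da1e2 da2c1 da2e2 db1c1 db1c2 db1e1 db1e2 db2c2 db2e1 db2e2 da1b1 da2b1 da2b2 dc1e1 dc1e2 dc2e2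
          omega
    · rcases tAj with tAj
      · rcases tBj with tBj|tBj|tBj
        · clear da1c2 da1e1 da1e2 da2c1 da2e1 db1c1 db1e1 db2c1 db2c2 db2e1 db2e2 da1b1 da1b2 da2b2 dc1e1 dc1e2 dc2e1
          omega
        · clear da1c2 da1e1 da2c1 da2e1 da2e2 db1c1 db1e1 db1e2 db2c1 db2c2 db2e1 db2e2 da1b1 da1b2 da2b2 dc1e1 dc2e1 dc2e2
          omega
        · clear da1c2 da1e1 da1e2 da2c1 da2e2 db1c1 db1e2 db2c1 db2c2 db2e1 da1b1 da1b2 da2b2 dc1e1 dc1e2 dc2e2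
          omega




section
variable {V : Type*} [DecidableEq V]

lemma length_pair (a b : V) (hab : a ≠ b) : ∀ (l : List V),
    (∀ x ∈ l, x = a ∨ x = b) → l.length = l.count a + l.count b
  | [], _ => by simp
  | (c :: t), h => by
    have hc := h c (by simp)
    have ht := length_pair a b hab t (fun x hx => h x (by simp [hx]))
    rcases hc with rfl | rfl <;>
      simp [List.count_cons, hab, Ne.symm hab, ht] <;> omega

lemma filter_pair_eq_of_sublist {w : List V} {a b : V} (hab : a ≠ b)
    (ha : w.count a = 2) (hb : w.count b = 2) (l : List V)
    (hl : ∀ x ∈ l, x = a ∨ x = b) (hlen : l.length = 4)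
    (hsub : List.Sublist l w) : (w.filter fun x => decide (x = a ∨ x = b)) = l := by
  set f := w.filter fun x => decide (x = a ∨ x = b) with hf
  have hfl : ∀ x ∈ f, x = a ∨ x = b := by
    intro x hx
    have := List.of_mem_filter hx
    simpa using this
  have hca : f.count a = 2 := by
    rw [hf, List.count_filter (by simp)]; exact ha
  have hcb : f.count b = 2 := by
    rw [hf, List.count_filter (by simp)]; exact hb
  have hflen : f.length = 4 := by
    rw [length_pair a b hab f hfl, hca, hcb]
  have hsub2 : List.Sublist l f := by
    have := hsub.filter (fun x => decide (x = a ∨ x = b))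
    rwa [List.filter_eq_self.mpr (by intro x hx; simpa using hl x hx)] at this
  exact (hsub2.eq_of_length (by omega)).symm

/-- the filtered word is `[a,b,a,b]` iff positions interleave. -/
lemma filter_eq_abab_iff {w : List V} {a b : V} (hab : a ≠ b)
    (ha : w.count a = 2) (hb : w.count b = 2)
    {ia ja ib jb : ℕ}
    (hia : w[ia]? = some a) (hja : w[ja]? = some a) (hlta : ia < ja)
    (hua : ∀ k, w[k]? = some a → k = ia ∨ k = ja)
    (hib : w[ib]? = some b) (hjb : w[jb]? = some b) (hltb : ib < jb)
    (hub : ∀ k, w[k]? = some b → k = ib ∨ k = jb) :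
    (w.filter fun x => decide (x = a ∨ x = b)) = [a, b, a, b] ↔
      (ia < ib ∧ ib < ja ∧ ja < jb) := by
  have hjalen : ja < w.length := List.getElem?_eq_some_iff.mp hja |>.1
  have hjblen : jb < w.length := List.getElem?_eq_some_iff.mp hjb |>.1
  constructor
  · intro hfe
    have hsub : List.Sublist [a,b,a,b] w := hfe ▸ (List.filter_sublist (l := w))
    obtain ⟨g, hg⟩ := List.sublist_iff_exists_orderEmbedding_getElem?_eq.mp hsub
    have h0 := hg 0; have h1 := hg 1; have h2 := hg 2; have h3 := hg 3
    simp only [List.getElem?_cons_zero, List.getElem?_cons_succ] at h0 h1 h2 h3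
    have e0 : w[(g 0)]? = some a := h0.symm
    have e1 : w[(g 1)]? = some b := h1.symm
    have e2 : w[(g 2)]? = some a := h2.symm
    have e3 : w[(g 3)]? = some b := h3.symm
    have m01 : g 0 < g 1 := g.strictMono (by norm_num)
    have m12 : g 1 < g 2 := g.strictMono (by norm_num)
    have m23 : g 2 < g 3 := g.strictMono (by norm_num)
    have o0 := hua _ e0; have o2 := hua _ e2
    have o1 := hub _ e1; have o3 := hub _ e3
    omega
  · rintro ⟨h1, h2, h3⟩
    apply filter_pair_eq_of_sublist hab ha hb _ (by intro x hx; simp at hx; tauto) (by rfl)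
    rw [List.sublist_iff_exists_orderEmbedding_getElem?_eq]
    refine ⟨OrderEmbedding.ofStrictMono
      (fun n => if n = 0 then ia else if n = 1 then ib else if n = 2 then ja
        else if n = 3 then jb else w.length + n - 3) ?_, ?_⟩
    · intro m n hmn
      simp only
      split_ifs <;> omega
    · intro ix
      match ix with
      | 0 => exact hia.symm
      | 1 => exact hib.symm
      | 2 => exact hja.symm
      | 3 => exact hjb.symm
      | (n+4) =>
        show [a, b, a, b][n+4]? = w[(if n+4 = 0 then ia else if n+4 = 1 then ib else if n+4 = 2 then ja
          else if n+4 = 3 then jb else w.length + (n+4) - 3)]?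
        rw [List.getElem?_eq_none (by simp),
          List.getElem?_eq_none (by simp only [if_neg (by omega : ¬ n+4 = 0),
            if_neg (by omega : ¬ n+4 = 1), if_neg (by omega : ¬ n+4 = 2),
            if_neg (by omega : ¬ n+4 = 3)]; omega)]

end

section
variable {V : Type*} [DecidableEq V]

lemma chain'_four {a b : V} (hab : a ≠ b) (f : List V)
    (hfl : ∀ x ∈ f, x = a ∨ x = b) (hca : f.count a = 2) (hcb : f.count b = 2)
    (hlen : f.length = 4) :
    f.Chain' (· ≠ ·) ↔ f = [a, b, a, b] ∨ f = [b, a, b, a] := by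
  match f, hlen with
  | [c1, c2, c3, c4], _ =>
    have h1 := hfl c1 (by simp)
    have h2 := hfl c2 (by simp)
    have h3 := hfl c3 (by simp)
    have h4 := hfl c4 (by simp)
    rcases h1 with rfl | rfl <;> rcases h2 with rfl | rfl <;>
      rcases h3 with rfl | rfl <;> rcases h4 with rfl | rfl <;>
      simp_all [List.count_cons, List.Chain', List.isChain_cons_cons, hab, Ne.symm hab]

lemma occ_zero {w : List V} {v : V} (h : w.count v = 0) :
    ∀ k : ℕ, w[k]? ≠ some v := by
  intro k hk
  have : v ∈ w := List.mem_of_getElem? hk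
  rw [← List.count_pos_iff] at this
  omega

lemma occ_one {w : List V} {v : V} (h : w.count v = 1) :
    ∃ i : ℕ, w[i]? = some v ∧ ∀ k : ℕ, w[k]? = some v → k = i := by
  induction w with
  | nil => simp at h
  | cons c t ih =>
    by_cases hc : c = v
    · subst hc
      have ht : t.count c = 0 := by simp [List.count_cons] at h; omega
      refine ⟨0, by simp, ?_⟩
      intro k hk
      match k with
      | 0 => rfl
      | (n+1) => exact absurd hk (occ_zero ht n)
    · have ht : t.count v = 1 := by simp [List.count_cons, hc] at h ⊢; omega
      obtain ⟨i, hi, hu⟩ := ih ht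
      refine ⟨i + 1, by simpa using hi, ?_⟩
      intro k hk
      match k with
      | 0 => simp at hk; exact absurd hk hc
      | (n+1) => simp only [List.getElem?_cons_succ] at hk; exact congrArg (· + 1) (hu n hk)

lemma occ_two {w : List V} {v : V} (h : w.count v = 2) :
    ∃ i j : ℕ, i < j ∧ w[i]? = some v ∧ w[j]? = some v ∧
      ∀ k : ℕ, w[k]? = some v → k = i ∨ k = j := by
  induction w with
  | nil => simp at h
  | cons c t ih =>
    by_cases hc : c = v
    · subst hc
      have ht : t.count c = 1 := by simp [List.count_cons] at h; omega
      obtain ⟨i, hi, hu⟩ := occ_one ht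
      refine ⟨0, i + 1, by omega, by simp, by simpa using hi, ?_⟩
      intro k hk
      match k with
      | 0 => exact Or.inl rfl
      | (n+1) =>
        simp only [List.getElem?_cons_succ] at hk
        exact Or.inr (congrArg (· + 1) (hu n hk))
    · have ht : t.count v = 2 := by simp [List.count_cons, hc] at h ⊢; omega
      obtain ⟨i, j, hij, hi, hj, hu⟩ := ih ht
      refine ⟨i + 1, j + 1, by omega, by simpa using hi, by simpa using hj, ?_⟩
      intro k hk
      match k with
      | 0 => simp at hk; exact absurd hk hc
      | (n+1) =>
        simp only [List.getElem?_cons_succ] at hk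
        rcases hu n hk with rfl | rfl
        · exact Or.inl rfl
        · exact Or.inr rfl

lemma alternates_iff_crossing {w : List V} {a b : V} (hab : a ≠ b)
    (ha : w.count a = 2) (hb : w.count b = 2)
    {ia ja ib jb : ℕ}
    (hia : w[ia]? = some a) (hja : w[ja]? = some a) (hlta : ia < ja)
    (hua : ∀ k, w[k]? = some a → k = ia ∨ k = ja)
    (hib : w[ib]? = some b) (hjb : w[jb]? = some b) (hltb : ib < jb)
    (hub : ∀ k, w[k]? = some b → k = ib ∨ k = jb) :
    Alternates w a b ↔ Crossing ia ja ib jb := by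
  have hfl : ∀ x ∈ (w.filter fun x => decide (x = a ∨ x = b)), x = a ∨ x = b := by
    intro x hx; have := List.of_mem_filter hx; simpa using this
  have hca : (w.filter fun x => decide (x = a ∨ x = b)).count a = 2 := by
    rw [List.count_filter (by simp)]; exact ha
  have hcb : (w.filter fun x => decide (x = a ∨ x = b)).count b = 2 := by
    rw [List.count_filter (by simp)]; exact hb
  have hflen : (w.filter fun x => decide (x = a ∨ x = b)).length = 4 := by
    rw [length_pair a b hab _ hfl, hca, hcb]
  have hswap : (w.filter fun x => decide (x = b ∨ x = a)) =
      (w.filter fun x => decide (x = a ∨ x = b)) := by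
    apply List.filter_congr; intro x _; simp only [decide_eq_decide]; tauto
  unfold Alternates Crossing
  rw [chain'_four hab _ hfl hca hcb hflen,
    filter_eq_abab_iff hab ha hb hia hja hlta hua hib hjb hltb hub,
    ← hswap, filter_eq_abab_iff (Ne.symm hab) hb ha hib hjb hltb hub hia hja hlta hua]

end
lemma core1 (p q : Fin 8 → ℕ) (hpq : ∀ v, p v < q v)
    (hne : ∀ u v : Fin 8, u ≠ v → p u ≠ p v ∧ p u ≠ q v ∧ q u ≠ q v ∧ q u ≠ p v)
    (hadj : ∀ u v : Fin 8, u ≠ v → (B3.Adj u v ↔ Crossing (p u) (q u) (p v) (q v)))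
    (hxy1 : p 0 < p 1) (hxy2 : p 1 < q 0) (hxy3 : q 0 < q 1) : False := by
  have hne21 := hne 2 1 (by decide)
  have hne23 := hne 2 3 (by decide)
  have hne24 := hne 2 4 (by decide)
  have hne25 := hne 2 5 (by decide)
  have hne26 := hne 2 6 (by decide)
  have hne27 := hne 2 7 (by decide)
  have hne30 := hne 3 0 (by decide)
  have hne34 := hne 3 4 (by decide)
  have hne35 := hne 3 5 (by decide)
  have hne36 := hne 3 6 (by decide)
  have hne37 := hne 3 7 (by decide)
  have hne41 := hne 4 1 (by decide)
  have hne45 := hne 4 5 (by decide)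
  have hne46 := hne 4 6 (by decide)
  have hne47 := hne 4 7 (by decide)
  have hne50 := hne 5 0 (by decide)
  have hne56 := hne 5 6 (by decide)
  have hne57 := hne 5 7 (by decide)
  have hne61 := hne 6 1 (by decide)
  have hne67 := hne 6 7 (by decide)
  have hne70 := hne 7 0 (by decide)
  have cAX0 : Crossing (p 0) (q 0) (p 2) (q 2) := (hadj 0 2 (by decide)).mp (by decide)
  have nAY0 : ¬ Crossing (p 1) (q 1) (p 2) (q 2) := fun h => absurd ((hadj 1 2 (by decide)).mpr h) (by decide)
  have cBY0 : Crossing (p 1) (q 1) (p 3) (q 3) := (hadj 1 3 (by decide)).mp (by decide)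
  have nBX0 : ¬ Crossing (p 0) (q 0) (p 3) (q 3) := fun h => absurd ((hadj 0 3 (by decide)).mpr h) (by decide)
  have cAB0 : Crossing (p 2) (q 2) (p 3) (q 3) := (hadj 2 3 (by decide)).mp (by decide)
  have tA0 := pageA hxy1 hxy2 hxy3 (hpq 2) cAX0 nAY0 hne21.1 hne21.2.2.2 hne21.2.1 hne21.2.2.1
  have tB0 := pageB hxy1 hxy2 hxy3 (hpq 3) cBY0 nBX0 hne30.1 hne30.2.2.2 hne30.2.1 hne30.2.2.1
  have cAX1 : Crossing (p 0) (q 0) (p 4) (q 4) := (hadj 0 4 (by decide)).mp (by decide)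
  have nAY1 : ¬ Crossing (p 1) (q 1) (p 4) (q 4) := fun h => absurd ((hadj 1 4 (by decide)).mpr h) (by decide)
  have cBY1 : Crossing (p 1) (q 1) (p 5) (q 5) := (hadj 1 5 (by decide)).mp (by decide)
  have nBX1 : ¬ Crossing (p 0) (q 0) (p 5) (q 5) := fun h => absurd ((hadj 0 5 (by decide)).mpr h) (by decide)
  have cAB1 : Crossing (p 4) (q 4) (p 5) (q 5) := (hadj 4 5 (by decide)).mp (by decide)
  have tA1 := pageA hxy1 hxy2 hxy3 (hpq 4) cAX1 nAY1 hne41.1 hne41.2.2.2 hne41.2.1 hne41.2.2.1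
  have tB1 := pageB hxy1 hxy2 hxy3 (hpq 5) cBY1 nBX1 hne50.1 hne50.2.2.2 hne50.2.1 hne50.2.2.1
  have cAX2 : Crossing (p 0) (q 0) (p 6) (q 6) := (hadj 0 6 (by decide)).mp (by decide)
  have nAY2 : ¬ Crossing (p 1) (q 1) (p 6) (q 6) := fun h => absurd ((hadj 1 6 (by decide)).mpr h) (by decide)
  have cBY2 : Crossing (p 1) (q 1) (p 7) (q 7) := (hadj 1 7 (by decide)).mp (by decide)
  have nBX2 : ¬ Crossing (p 0) (q 0) (p 7) (q 7) := fun h => absurd ((hadj 0 7 (by decide)).mpr h) (by decide)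
  have cAB2 : Crossing (p 6) (q 6) (p 7) (q 7) := (hadj 6 7 (by decide)).mp (by decide)
  have tA2 := pageA hxy1 hxy2 hxy3 (hpq 6) cAX2 nAY2 hne61.1 hne61.2.2.2 hne61.2.1 hne61.2.2.1
  have tB2 := pageB hxy1 hxy2 hxy3 (hpq 7) cBY2 nBX2 hne70.1 hne70.2.2.2 hne70.2.1 hne70.2.2.1
  have nAA01 : ¬ Crossing (p 2) (q 2) (p 4) (q 4) := fun h => absurd ((hadj 2 4 (by decide)).mpr h) (by decide)
  have nBB01 : ¬ Crossing (p 3) (q 3) (p 5) (q 5) := fun h => absurd ((hadj 3 5 (by decide)).mpr h) (by decide)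
  have nAB01 : ¬ Crossing (p 2) (q 2) (p 5) (q 5) := fun h => absurd ((hadj 2 5 (by decide)).mpr h) (by decide)
  have nBA01 : ¬ Crossing (p 4) (q 4) (p 3) (q 3) := fun h => absurd ((hadj 4 3 (by decide)).mpr h) (by decide)
  have nAA02 : ¬ Crossing (p 2) (q 2) (p 6) (q 6) := fun h => absurd ((hadj 2 6 (by decide)).mpr h) (by decide)
  have nBB02 : ¬ Crossing (p 3) (q 3) (p 7) (q 7) := fun h => absurd ((hadj 3 7 (by decide)).mpr h) (by decide)
  have nAB02 : ¬ Crossing (p 2) (q 2) (p 7) (q 7) := fun h => absurd ((hadj 2 7 (by decide)).mpr h) (by decide)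
  have nBA02 : ¬ Crossing (p 6) (q 6) (p 3) (q 3) := fun h => absurd ((hadj 6 3 (by decide)).mpr h) (by decide)
  have nAA12 : ¬ Crossing (p 4) (q 4) (p 6) (q 6) := fun h => absurd ((hadj 4 6 (by decide)).mpr h) (by decide)
  have nBB12 : ¬ Crossing (p 5) (q 5) (p 7) (q 7) := fun h => absurd ((hadj 5 7 (by decide)).mpr h) (by decide)
  have nAB12 : ¬ Crossing (p 4) (q 4) (p 7) (q 7) := fun h => absurd ((hadj 4 7 (by decide)).mpr h) (by decide)
  have nBA12 : ¬ Crossing (p 6) (q 6) (p 5) (q 5) := fun h => absurd ((hadj 6 5 (by decide)).mpr h) (by decide)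
  clear hadj hne
  rcases tA0 with tA0|tA0|tA0
  · rcases tA1 with tA1|tA1|tA1
    · rcases tA2 with tA2|tA2|tA2
      · exact pairL hxy1 hxy2 hxy3 (Or.inl tA0) tB0 cAB0 (Or.inl tA1) tB1 cAB1 nAA01 nBB01 nAB01 nBA01 hne24.1 hne24.2.1 hne25.1 hne25.2.1 hne24.2.2.2 hne24.2.2.1 hne25.2.2.2 hne25.2.2.1 hne34.1 hne34.2.1 hne35.1 hne35.2.1 hne34.2.2.2 hne34.2.2.1 hne35.2.2.2 hne35.2.2.1 hne23.1 hne23.2.1 hne23.2.2.2 hne23.2.2.1 hne45.1 hne45.2.1 hne45.2.2.2 hne45.2.2.1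
      · exact pairL hxy1 hxy2 hxy3 (Or.inl tA0) tB0 cAB0 (Or.inl tA1) tB1 cAB1 nAA01 nBB01 nAB01 nBA01 hne24.1 hne24.2.1 hne25.1 hne25.2.1 hne24.2.2.2 hne24.2.2.1 hne25.2.2.2 hne25.2.2.1 hne34.1 hne34.2.1 hne35.1 hne35.2.1 hne34.2.2.2 hne34.2.2.1 hne35.2.2.2 hne35.2.2.1 hne23.1 hne23.2.1 hne23.2.2.2 hne23.2.2.1 hne45.1 hne45.2.1 hne45.2.2.2 hne45.2.2.1
      · exact pairL hxy1 hxy2 hxy3 (Or.inl tA0) tB0 cAB0 (Or.inl tA1) tB1 cAB1 nAA01 nBB01 nAB01 nBA01 hne24.1 hne24.2.1 hne25.1 hne25.2.1 hne24.2.2.2 hne24.2.2.1 hne25.2.2.2 hne25.2.2.1 hne34.1 hne34.2.1 hne35.1 hne35.2.1 hne34.2.2.2 hne34.2.2.1 hne35.2.2.2 hne35.2.2.1 hne23.1 hne23.2.1 hne23.2.2.2 hne23.2.2.1 hne45.1 hne45.2.1 hne45.2.2.2 hne45.2.2.1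
    · rcases tA2 with tA2|tA2|tA2
      · exact pairL hxy1 hxy2 hxy3 (Or.inl tA0) tB0 cAB0 (Or.inr tA1) tB1 cAB1 nAA01 nBB01 nAB01 nBA01 hne24.1 hne24.2.1 hne25.1 hne25.2.1 hne24.2.2.2 hne24.2.2.1 hne25.2.2.2 hne25.2.2.1 hne34.1 hne34.2.1 hne35.1 hne35.2.1 hne34.2.2.2 hne34.2.2.1 hne35.2.2.2 hne35.2.2.1 hne23.1 hne23.2.1 hne23.2.2.2 hne23.2.2.1 hne45.1 hne45.2.1 hne45.2.2.2 hne45.2.2.1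
      · exact pairL hxy1 hxy2 hxy3 (Or.inl tA0) tB0 cAB0 (Or.inr tA1) tB1 cAB1 nAA01 nBB01 nAB01 nBA01 hne24.1 hne24.2.1 hne25.1 hne25.2.1 hne24.2.2.2 hne24.2.2.1 hne25.2.2.2 hne25.2.2.1 hne34.1 hne34.2.1 hne35.1 hne35.2.1 hne34.2.2.2 hne34.2.2.1 hne35.2.2.2 hne35.2.2.1 hne23.1 hne23.2.1 hne23.2.2.2 hne23.2.2.1 hne45.1 hne45.2.1 hne45.2.2.2 hne45.2.2.1
      · exact pairL hxy1 hxy2 hxy3 (Or.inl tA0) tB0 cAB0 (Or.inr tA1) tB1 cAB1 nAA01 nBB01 nAB01 nBA01 hne24.1 hne24.2.1 hne25.1 hne25.2.1 hne24.2.2.2 hne24.2.2.1 hne25.2.2.2 hne25.2.2.1 hne34.1 hne34.2.1 hne35.1 hne35.2.1 hne34.2.2.2 hne34.2.2.1 hne35.2.2.2 hne35.2.2.1 hne23.1 hne23.2.1 hne23.2.2.2 hne23.2.2.1 hne45.1 hne45.2.1 hne45.2.2.2 hne45.2.2.1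
    · rcases tA2 with tA2|tA2|tA2
      · exact pairL hxy1 hxy2 hxy3 (Or.inl tA0) tB0 cAB0 (Or.inl tA2) tB2 cAB2 nAA02 nBB02 nAB02 nBA02 hne26.1 hne26.2.1 hne27.1 hne27.2.1 hne26.2.2.2 hne26.2.2.1 hne27.2.2.2 hne27.2.2.1 hne36.1 hne36.2.1 hne37.1 hne37.2.1 hne36.2.2.2 hne36.2.2.1 hne37.2.2.2 hne37.2.2.1 hne23.1 hne23.2.1 hne23.2.2.2 hne23.2.2.1 hne67.1 hne67.2.1 hne67.2.2.2 hne67.2.2.1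
      · exact pairL hxy1 hxy2 hxy3 (Or.inl tA0) tB0 cAB0 (Or.inr tA2) tB2 cAB2 nAA02 nBB02 nAB02 nBA02 hne26.1 hne26.2.1 hne27.1 hne27.2.1 hne26.2.2.2 hne26.2.2.1 hne27.2.2.2 hne27.2.2.1 hne36.1 hne36.2.1 hne37.1 hne37.2.1 hne36.2.2.2 hne36.2.2.1 hne37.2.2.2 hne37.2.2.1 hne23.1 hne23.2.1 hne23.2.2.2 hne23.2.2.1 hne67.1 hne67.2.1 hne67.2.2.2 hne67.2.2.1
      · exact pairR hxy1 hxy2 hxy3 tA1 tB1 cAB1 tA2 tB2 cAB2 nAA12 nBB12 nAB12 nBA12 hne46.1 hne46.2.1 hne47.1 hne47.2.1 hne46.2.2.2 hne46.2.2.1 hne47.2.2.2 hne47.2.2.1 hne56.1 hne56.2.1 hne57.1 hne57.2.1 hne56.2.2.2 hne56.2.2.1 hne57.2.2.2 hne57.2.2.1 hne45.1 hne45.2.1 hne45.2.2.2 hne45.2.2.1 hne67.1 hne67.2.1 hne67.2.2.2 hne67.2.2.1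
  · rcases tA1 with tA1|tA1|tA1
    · rcases tA2 with tA2|tA2|tA2
      · exact pairL hxy1 hxy2 hxy3 (Or.inr tA0) tB0 cAB0 (Or.inl tA1) tB1 cAB1 nAA01 nBB01 nAB01 nBA01 hne24.1 hne24.2.1 hne25.1 hne25.2.1 hne24.2.2.2 hne24.2.2.1 hne25.2.2.2 hne25.2.2.1 hne34.1 hne34.2.1 hne35.1 hne35.2.1 hne34.2.2.2 hne34.2.2.1 hne35.2.2.2 hne35.2.2.1 hne23.1 hne23.2.1 hne23.2.2.2 hne23.2.2.1 hne45.1 hne45.2.1 hne45.2.2.2 hne45.2.2.1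
      · exact pairL hxy1 hxy2 hxy3 (Or.inr tA0) tB0 cAB0 (Or.inl tA1) tB1 cAB1 nAA01 nBB01 nAB01 nBA01 hne24.1 hne24.2.1 hne25.1 hne25.2.1 hne24.2.2.2 hne24.2.2.1 hne25.2.2.2 hne25.2.2.1 hne34.1 hne34.2.1 hne35.1 hne35.2.1 hne34.2.2.2 hne34.2.2.1 hne35.2.2.2 hne35.2.2.1 hne23.1 hne23.2.1 hne23.2.2.2 hne23.2.2.1 hne45.1 hne45.2.1 hne45.2.2.2 hne45.2.2.1
      · exact pairL hxy1 hxy2 hxy3 (Or.inr tA0) tB0 cAB0 (Or.inl tA1) tB1 cAB1 nAA01 nBB01 nAB01 nBA01 hne24.1 hne24.2.1 hne25.1 hne25.2.1 hne24.2.2.2 hne24.2.2.1 hne25.2.2.2 hne25.2.2.1 hne34.1 hne34.2.1 hne35.1 hne35.2.1 hne34.2.2.2 hne34.2.2.1 hne35.2.2.2 hne35.2.2.1 hne23.1 hne23.2.1 hne23.2.2.2 hne23.2.2.1 hne45.1 hne45.2.1 hne45.2.2.2 hne45.2.2.1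
    · rcases tA2 with tA2|tA2|tA2
      · exact pairL hxy1 hxy2 hxy3 (Or.inr tA0) tB0 cAB0 (Or.inr tA1) tB1 cAB1 nAA01 nBB01 nAB01 nBA01 hne24.1 hne24.2.1 hne25.1 hne25.2.1 hne24.2.2.2 hne24.2.2.1 hne25.2.2.2 hne25.2.2.1 hne34.1 hne34.2.1 hne35.1 hne35.2.1 hne34.2.2.2 hne34.2.2.1 hne35.2.2.2 hne35.2.2.1 hne23.1 hne23.2.1 hne23.2.2.2 hne23.2.2.1 hne45.1 hne45.2.1 hne45.2.2.2 hne45.2.2.1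
      · exact pairL hxy1 hxy2 hxy3 (Or.inr tA0) tB0 cAB0 (Or.inr tA1) tB1 cAB1 nAA01 nBB01 nAB01 nBA01 hne24.1 hne24.2.1 hne25.1 hne25.2.1 hne24.2.2.2 hne24.2.2.1 hne25.2.2.2 hne25.2.2.1 hne34.1 hne34.2.1 hne35.1 hne35.2.1 hne34.2.2.2 hne34.2.2.1 hne35.2.2.2 hne35.2.2.1 hne23.1 hne23.2.1 hne23.2.2.2 hne23.2.2.1 hne45.1 hne45.2.1 hne45.2.2.2 hne45.2.2.1
      · exact pairL hxy1 hxy2 hxy3 (Or.inr tA0) tB0 cAB0 (Or.inr tA1) tB1 cAB1 nAA01 nBB01 nAB01 nBA01 hne24.1 hne24.2.1 hne25.1 hne25.2.1 hne24.2.2.2 hne24.2.2.1 hne25.2.2.2 hne25.2.2.1 hne34.1 hne34.2.1 hne35.1 hne35.2.1 hne34.2.2.2 hne34.2.2.1 hne35.2.2.2 hne35.2.2.1 hne23.1 hne23.2.1 hne23.2.2.2 hne23.2.2.1 hne45.1 hne45.2.1 hne45.2.2.2 hne45.2.2.1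
    · rcases tA2 with tA2|tA2|tA2
      · exact pairL hxy1 hxy2 hxy3 (Or.inr tA0) tB0 cAB0 (Or.inl tA2) tB2 cAB2 nAA02 nBB02 nAB02 nBA02 hne26.1 hne26.2.1 hne27.1 hne27.2.1 hne26.2.2.2 hne26.2.2.1 hne27.2.2.2 hne27.2.2.1 hne36.1 hne36.2.1 hne37.1 hne37.2.1 hne36.2.2.2 hne36.2.2.1 hne37.2.2.2 hne37.2.2.1 hne23.1 hne23.2.1 hne23.2.2.2 hne23.2.2.1 hne67.1 hne67.2.1 hne67.2.2.2 hne67.2.2.1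
      · exact pairL hxy1 hxy2 hxy3 (Or.inr tA0) tB0 cAB0 (Or.inr tA2) tB2 cAB2 nAA02 nBB02 nAB02 nBA02 hne26.1 hne26.2.1 hne27.1 hne27.2.1 hne26.2.2.2 hne26.2.2.1 hne27.2.2.2 hne27.2.2.1 hne36.1 hne36.2.1 hne37.1 hne37.2.1 hne36.2.2.2 hne36.2.2.1 hne37.2.2.2 hne37.2.2.1 hne23.1 hne23.2.1 hne23.2.2.2 hne23.2.2.1 hne67.1 hne67.2.1 hne67.2.2.2 hne67.2.2.1
      · exact pairR hxy1 hxy2 hxy3 tA1 tB1 cAB1 tA2 tB2 cAB2 nAA12 nBB12 nAB12 nBA12 hne46.1 hne46.2.1 hne47.1 hne47.2.1 hne46.2.2.2 hne46.2.2.1 hne47.2.2.2 hne47.2.2.1 hne56.1 hne56.2.1 hne57.1 hne57.2.1 hne56.2.2.2 hne56.2.2.1 hne57.2.2.2 hne57.2.2.1 hne45.1 hne45.2.1 hne45.2.2.2 hne45.2.2.1 hne67.1 hne67.2.1 hne67.2.2.2 hne67.2.2.1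
  · rcases tA1 with tA1|tA1|tA1
    · rcases tA2 with tA2|tA2|tA2
      · exact pairL hxy1 hxy2 hxy3 (Or.inl tA1) tB1 cAB1 (Or.inl tA2) tB2 cAB2 nAA12 nBB12 nAB12 nBA12 hne46.1 hne46.2.1 hne47.1 hne47.2.1 hne46.2.2.2 hne46.2.2.1 hne47.2.2.2 hne47.2.2.1 hne56.1 hne56.2.1 hne57.1 hne57.2.1 hne56.2.2.2 hne56.2.2.1 hne57.2.2.2 hne57.2.2.1 hne45.1 hne45.2.1 hne45.2.2.2 hne45.2.2.1 hne67.1 hne67.2.1 hne67.2.2.2 hne67.2.2.1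
      · exact pairL hxy1 hxy2 hxy3 (Or.inl tA1) tB1 cAB1 (Or.inr tA2) tB2 cAB2 nAA12 nBB12 nAB12 nBA12 hne46.1 hne46.2.1 hne47.1 hne47.2.1 hne46.2.2.2 hne46.2.2.1 hne47.2.2.2 hne47.2.2.1 hne56.1 hne56.2.1 hne57.1 hne57.2.1 hne56.2.2.2 hne56.2.2.1 hne57.2.2.2 hne57.2.2.1 hne45.1 hne45.2.1 hne45.2.2.2 hne45.2.2.1 hne67.1 hne67.2.1 hne67.2.2.2 hne67.2.2.1
      · exact pairR hxy1 hxy2 hxy3 tA0 tB0 cAB0 tA2 tB2 cAB2 nAA02 nBB02 nAB02 nBA02 hne26.1 hne26.2.1 hne27.1 hne27.2.1 hne26.2.2.2 hne26.2.2.1 hne27.2.2.2 hne27.2.2.1 hne36.1 hne36.2.1 hne37.1 hne37.2.1 hne36.2.2.2 hne36.2.2.1 hne37.2.2.2 hne37.2.2.1 hne23.1 hne23.2.1 hne23.2.2.2 hne23.2.2.1 hne67.1 hne67.2.1 hne67.2.2.2 hne67.2.2.1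
    · rcases tA2 with tA2|tA2|tA2
      · exact pairL hxy1 hxy2 hxy3 (Or.inr tA1) tB1 cAB1 (Or.inl tA2) tB2 cAB2 nAA12 nBB12 nAB12 nBA12 hne46.1 hne46.2.1 hne47.1 hne47.2.1 hne46.2.2.2 hne46.2.2.1 hne47.2.2.2 hne47.2.2.1 hne56.1 hne56.2.1 hne57.1 hne57.2.1 hne56.2.2.2 hne56.2.2.1 hne57.2.2.2 hne57.2.2.1 hne45.1 hne45.2.1 hne45.2.2.2 hne45.2.2.1 hne67.1 hne67.2.1 hne67.2.2.2 hne67.2.2.1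
      · exact pairL hxy1 hxy2 hxy3 (Or.inr tA1) tB1 cAB1 (Or.inr tA2) tB2 cAB2 nAA12 nBB12 nAB12 nBA12 hne46.1 hne46.2.1 hne47.1 hne47.2.1 hne46.2.2.2 hne46.2.2.1 hne47.2.2.2 hne47.2.2.1 hne56.1 hne56.2.1 hne57.1 hne57.2.1 hne56.2.2.2 hne56.2.2.1 hne57.2.2.2 hne57.2.2.1 hne45.1 hne45.2.1 hne45.2.2.2 hne45.2.2.1 hne67.1 hne67.2.1 hne67.2.2.2 hne67.2.2.1
      · exact pairR hxy1 hxy2 hxy3 tA0 tB0 cAB0 tA2 tB2 cAB2 nAA02 nBB02 nAB02 nBA02 hne26.1 hne26.2.1 hne27.1 hne27.2.1 hne26.2.2.2 hne26.2.2.1 hne27.2.2.2 hne27.2.2.1 hne36.1 hne36.2.1 hne37.1 hne37.2.1 hne36.2.2.2 hne36.2.2.1 hne37.2.2.2 hne37.2.2.1 hne23.1 hne23.2.1 hne23.2.2.2 hne23.2.2.1 hne67.1 hne67.2.1 hne67.2.2.2 hne67.2.2.1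
    · rcases tA2 with tA2|tA2|tA2
      · exact pairR hxy1 hxy2 hxy3 tA0 tB0 cAB0 tA1 tB1 cAB1 nAA01 nBB01 nAB01 nBA01 hne24.1 hne24.2.1 hne25.1 hne25.2.1 hne24.2.2.2 hne24.2.2.1 hne25.2.2.2 hne25.2.2.1 hne34.1 hne34.2.1 hne35.1 hne35.2.1 hne34.2.2.2 hne34.2.2.1 hne35.2.2.2 hne35.2.2.1 hne23.1 hne23.2.1 hne23.2.2.2 hne23.2.2.1 hne45.1 hne45.2.1 hne45.2.2.2 hne45.2.2.1
      · exact pairR hxy1 hxy2 hxy3 tA0 tB0 cAB0 tA1 tB1 cAB1 nAA01 nBB01 nAB01 nBA01 hne24.1 hne24.2.1 hne25.1 hne25.2.1 hne24.2.2.2 hne24.2.2.1 hne25.2.2.2 hne25.2.2.1 hne34.1 hne34.2.1 hne35.1 hne35.2.1 hne34.2.2.2 hne34.2.2.1 hne35.2.2.2 hne35.2.2.1 hne23.1 hne23.2.1 hne23.2.2.2 hne23.2.2.1 hne45.1 hne45.2.1 hne45.2.2.2 hne45.2.2.1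
      · exact pairR hxy1 hxy2 hxy3 tA0 tB0 cAB0 tA1 tB1 cAB1 nAA01 nBB01 nAB01 nBA01 hne24.1 hne24.2.1 hne25.1 hne25.2.1 hne24.2.2.2 hne24.2.2.1 hne25.2.2.2 hne25.2.2.1 hne34.1 hne34.2.1 hne35.1 hne35.2.1 hne34.2.2.2 hne34.2.2.1 hne35.2.2.2 hne35.2.2.1 hne23.1 hne23.2.1 hne23.2.2.2 hne23.2.2.1 hne45.1 hne45.2.1 hne45.2.2.2 hne45.2.2.1

def sigma8 : Fin 8 → Fin 8 := ![1,0,3,2,5,4,7,6]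

lemma core (p q : Fin 8 → ℕ) (hpq : ∀ v, p v < q v)
    (hne : ∀ u v : Fin 8, u ≠ v → p u ≠ p v ∧ p u ≠ q v ∧ q u ≠ q v ∧ q u ≠ p v)
    (hadj : ∀ u v : Fin 8, u ≠ v → (B3.Adj u v ↔ Crossing (p u) (q u) (p v) (q v))) :
    False := by
  have hσinj : ∀ u v : Fin 8, sigma8 u = sigma8 v → u = v := by decide
  have hσadj : ∀ u v : Fin 8, B3.Adj (sigma8 u) (sigma8 v) ↔ B3.Adj u v := by decide
  have h01 : Crossing (p 0) (q 0) (p 1) (q 1) := (hadj 0 1 (by decide)).mp (by decide)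
  rcases h01 with ⟨h0, h1, h2⟩ | ⟨h0, h1, h2⟩
  · exact core1 p q hpq hne hadj h0 h1 h2
  · exact core1 (fun v => p (sigma8 v)) (fun v => q (sigma8 v)) (fun v => hpq _)
      (fun u v huv => hne _ _ (fun e => huv (hσinj u v e)))
      (fun u v huv => ((hσadj u v).symm.trans (hadj _ _ (fun e => huv (hσinj u v e)))))
      h0 h1 h2

lemma alternates_of_count_one {V : Type*} [DecidableEq V] {w : List V} {a b : V} (hab : a ≠ b)
    (ha : w.count a = 1) (hb : w.count b = 1) : Alternates w a b := by
  have hfl : ∀ x ∈ (w.filter fun x => decide (x = a ∨ x = b)), x = a ∨ x = b := by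
    intro x hx; have := List.of_mem_filter hx; simpa using this
  have hca : (w.filter fun x => decide (x = a ∨ x = b)).count a = 1 := by
    rw [List.count_filter (by simp)]; exact ha
  have hcb : (w.filter fun x => decide (x = a ∨ x = b)).count b = 1 := by
    rw [List.count_filter (by simp)]; exact hb
  have hflen : (w.filter fun x => decide (x = a ∨ x = b)).length = 2 := by
    rw [length_pair a b hab _ hfl, hca, hcb]
  unfold Alternates
  match hm : (w.filter fun x => decide (x = a ∨ x = b)), hflen with
  | [c1, c2], _ =>
    have h1 := hfl c1 (by rw [hm]; simp)
    have h2 := hfl c2 (by rw [hm]; simp)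
    rw [hm] at hca hcb
    rcases h1 with rfl | rfl <;> rcases h2 with rfl | rfl <;>
      simp_all [List.count_cons, hab, Ne.symm hab, List.Chain']

theorem no_zero_uniform : ¬ ∃ w : List (Fin 8), (∀ v, w.count v = 0) ∧ Represents B3 w := by
  rintro ⟨w, hc, hmem, -⟩
  have h0 := hmem 0
  rw [← List.count_pos_iff] at h0
  rw [hc 0] at h0
  omega

theorem no_one_uniform : ¬ ∃ w : List (Fin 8), (∀ v, w.count v = 1) ∧ Represents B3 w := by
  rintro ⟨w, hc, -, hrep⟩
  have h24 : B3.Adj 2 4 :=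
    (hrep 2 4 (by decide)).mpr (alternates_of_count_one (by decide) (hc 2) (hc 4))
  exact absurd h24 (by decide)

theorem no_two_uniform : ¬ ∃ w : List (Fin 8), (∀ v, w.count v = 2) ∧ Represents B3 w := by
  rintro ⟨w, hcount, hmem, hrep⟩
  choose i j hij hi hj hu using fun v : Fin 8 => occ_two (hcount v)
  apply core i j hij
  · intro u v huv
    have key : ∀ k l : ℕ, w[k]? = some u → w[l]? = some v → k ≠ l := by
      intro k l hk hl e
      rw [e, hl] at hk
      exact huv (Option.some_injective _ hk.symm)
    exact ⟨key _ _ (hi u) (hi v), key _ _ (hi u) (hj v), key _ _ (hj u) (hj v),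
      key _ _ (hj u) (hi v)⟩
  · intro u v huv
    exact (hrep u v huv).trans
      (alternates_iff_crossing huv (hcount u) (hcount v) (hi u) (hj u) (hij u) (hu u)
        (hi v) (hj v) (hij v) (hu v))

theorem three_uniform : ∃ w : List (Fin 8), (∀ v, w.count v = 3) ∧ Represents B3 w := by
  refine ⟨myw, by decide, by decide, ?_⟩
  intro a b hab
  show badj a b = true ↔ Alternates myw a b
  revert hab; revert a b; decide

lemma B3_sInf : sInf {k | KWordRepresentable B3 k} = 3 := by
  have h3 : KWordRepresentable B3 3 := three_uniform
  refine le_antisymm (Nat.sInf_le h3) (le_csInf ⟨3, h3⟩ ?_)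
  intro m hm
  by_contra hlt
  push_neg at hlt
  interval_cases m
  · exact no_zero_uniform hm
  · exact no_one_uniform hm
  · exact no_two_uniform hm

/-! ### Transfer along an equivalence -/

lemma alternates_map {W : Type*} [DecidableEq V] [DecidableEq W] (e : V ≃ W)
    (w : List V) (a b : V) : Alternates (w.map e) (e a) (e b) ↔ Alternates w a b := by
  unfold Alternates
  rw [List.filter_map]
  have hpred : ((fun x => decide (x = e a ∨ x = e b)) ∘ e) =
      fun x => decide (x = a ∨ x = b) := by
    funext x
    simp [Function.comp, e.injective.eq_iff]
  rw [hpred]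
  unfold List.Chain'
  rw [List.isChain_map]
  constructor
  · exact fun h => h.imp fun p q hpq => e.injective.ne_iff.mp hpq
  · exact fun h => h.imp fun p q hpq => e.injective.ne_iff.mpr hpq

lemma kwr_map {W : Type*} [DecidableEq V] [DecidableEq W] (e : V ≃ W)
    (G : SimpleGraph V) (H : SimpleGraph W)
    (hadj : ∀ u v : V, G.Adj u v ↔ H.Adj (e u) (e v)) (k : ℕ) :
    KWordRepresentable G k → KWordRepresentable H k := by
  rintro ⟨w, hcount, hmem, hrep⟩
  refine ⟨w.map e, ?_, ?_, ?_⟩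
  · intro v
    rw [show v = e (e.symm v) by simp, List.count_map_of_injective _ _ e.injective]
    exact hcount _
  · intro v
    rw [show v = e (e.symm v) by simp]
    exact List.mem_map_of_mem (hmem _)
  · intro a b hab
    rw [show a = e (e.symm a) by simp, show b = e (e.symm b) by simp,
      alternates_map e w (e.symm a) (e.symm b), ← hadj]
    have : e.symm a ≠ e.symm b := fun h => hab (by simpa using congrArg e h)
    exact hrep _ _ this

/-! ### Walk extraction -/

lemma walk_len1 {V : Type*} {G : SimpleGraph V} {x y : V} (p : G.Walk x y)
    (h : p.length = 1) :
    G.Adj x y ∧ p.support = [x, y] ∧ p.edges = [s(x, y)] := by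
  cases p with
  | nil => simp at h
  | cons hadj q =>
    cases q with
    | nil => exact ⟨hadj, by simp, by simp⟩
    | cons hadj2 r => simp [SimpleGraph.Walk.length_cons] at h

lemma walk_len3 {V : Type*} {G : SimpleGraph V} {x y : V} (p : G.Walk x y)
    (h : p.length = 3) :
    ∃ a b, G.Adj x a ∧ G.Adj a b ∧ G.Adj b y ∧ p.support = [x, a, b, y] ∧
      p.edges = [s(x, a), s(a, b), s(b, y)] := by
  cases p with
  | nil => simp at h
  | cons hadj q =>
    cases q with
    | nil => simp [SimpleGraph.Walk.length_cons] at h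
    | cons hadj2 r =>
      cases r with
      | nil => simp [SimpleGraph.Walk.length_cons] at h
      | cons hadj3 t =>
        cases t with
        | nil => exact ⟨_, _, hadj, hadj2, hadj3, by simp, by simp⟩
        | cons hadj4 u => simp [SimpleGraph.Walk.length_cons] at h


/-- The book graph with three pages, i.e. the melon graph with exactly four
constituent paths, one of length one and the other three of length exactly three,
has representation number 3. -/
theorem melon_B3_repNum_eq_three {V : Type*} [Fintype V] [DecidableEq V]
    (G : SimpleGraph V) (x y : V) (P : Fin 4 → G.Walk x y)
    (hM : IsMelon G 4 x y P)
    (hlen : ∃ i0, (P i0).length = 1 ∧ ∀ i, i ≠ i0 → (P i).length = 3) :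
    repNum G = 3 := by
  obtain ⟨i0, hlen1, hlen3⟩ := hlen
  -- the three long paths
  set σ : Fin 3 → Fin 4 := fun k =>
    if (k : ℕ) < (i0 : ℕ) then ⟨k, by omega⟩ else ⟨(k : ℕ) + 1, by omega⟩ with hσ
  have hσne : ∀ k, σ k ≠ i0 := by
    intro k
    simp only [hσ]
    split <;> (intro e; rw [Fin.ext_iff] at e; simp at e; omega)
  have hσinj : Function.Injective σ := by
    intro k l e
    simp only [hσ] at e
    rw [Fin.ext_iff] at e ⊢
    split at e <;> split at e <;> simp at e <;> omega
  have hσsurj : ∀ i : Fin 4, i ≠ i0 → ∃ k, σ k = i := by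
    intro i hi
    rcases lt_or_gt_of_ne (fun e => hi (Fin.ext e)) with h | h
    · exact ⟨⟨i, by omega⟩, by simp only [hσ]; rw [if_pos (by simpa using h)]⟩
    · refine ⟨⟨(i : ℕ) - 1, by omega⟩, ?_⟩
      simp only [hσ]
      rw [if_neg (by simp; omega)]
      rw [Fin.ext_iff]
      simp
      omega
  -- extract data from the three long paths
  have hex : ∀ k : Fin 3, ∃ a b, G.Adj x a ∧ G.Adj a b ∧ G.Adj b y ∧
      (P (σ k)).support = [x, a, b, y] ∧
      (P (σ k)).edges = [s(x, a), s(a, b), s(b, y)] :=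
    fun k => walk_len3 _ (hlen3 _ (hσne k))
  choose a b hxa hab hby hsup hedg using hex
  obtain ⟨hxyadj, hsup1, hedg1⟩ := walk_len1 _ hlen1
  have hxy : x ≠ y := hM.ne
  -- distinctness within a page
  have hnodup : ∀ k, ([x, a k, b k, y] : List V).Nodup := by
    intro k
    rw [← hsup k]
    exact (hM.isPath (σ k)).support_nodup
  have hxa' : ∀ k, x ≠ a k := by intro k; have := hnodup k; simp at this; tauto
  have hxb' : ∀ k, x ≠ b k := by intro k; have := hnodup k; simp at this; tauto
  have hay : ∀ k, a k ≠ y := by intro k; have := hnodup k; simp at this; tauto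
  have hby' : ∀ k, b k ≠ y := by intro k; have := hnodup k; simp at this; tauto
  have hab' : ∀ k, a k ≠ b k := by intro k; have := hnodup k; simp at this; tauto
  -- membership facts
  have hamem : ∀ k, a k ∈ (P (σ k)).support := by intro k; rw [hsup k]; simp
  have hbmem : ∀ k, b k ∈ (P (σ k)).support := by intro k; rw [hsup k]; simp
  -- distinctness across pages
  have hcross : ∀ k l : Fin 3, k ≠ l →
      a k ≠ a l ∧ a k ≠ b l ∧ b k ≠ a l ∧ b k ≠ b l := by
    intro k l hkl
    have hσkl : σ k ≠ σ l := fun e => hkl (hσinj e)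
    refine ⟨?_, ?_, ?_, ?_⟩
    · intro e
      rcases hM.internallyDisjoint (σ k) (σ l) hσkl (a k) (hamem k)
        (e ▸ hamem l) with h | h
      · exact (hxa' k) h.symm
      · exact (hay k) h
    · intro e
      rcases hM.internallyDisjoint (σ k) (σ l) hσkl (a k) (hamem k)
        (e ▸ hbmem l) with h | h
      · exact (hxa' k) h.symm
      · exact (hay k) h
    · intro e
      rcases hM.internallyDisjoint (σ k) (σ l) hσkl (b k) (hbmem k)
        (e ▸ hamem l) with h | h
      · exact (hxb' k) h.symm
      · exact (hby' k) h
    · intro e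
      rcases hM.internallyDisjoint (σ k) (σ l) hσkl (b k) (hbmem k)
        (e ▸ hbmem l) with h | h
      · exact (hxb' k) h.symm
      · exact (hby' k) h
  -- vertex cover
  have hcover : ∀ v : V, v = x ∨ v = y ∨ ∃ k, v = a k ∨ v = b k := by
    intro v
    obtain ⟨i, hi⟩ := hM.support_cover v
    by_cases hii : i = i0
    · subst hii
      rw [hsup1] at hi
      simp at hi
      tauto
    · obtain ⟨k, rfl⟩ := hσsurj i hii
      rw [hsup k] at hi
      simp at hi
      rcases hi with h | h | h | h
      · exact Or.inl h
      · exact Or.inr (Or.inr ⟨k, Or.inl h⟩)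
      · exact Or.inr (Or.inr ⟨k, Or.inr h⟩)
      · exact Or.inr (Or.inl h)
  -- adjacency characterization (forward)
  have hAdj : ∀ u v : V, G.Adj u v → (u = x ∧ v = y) ∨ (u = y ∧ v = x) ∨
      ∃ k, (u = x ∧ v = a k) ∨ (v = x ∧ u = a k) ∨ (u = a k ∧ v = b k) ∨
        (v = a k ∧ u = b k) ∨ (u = b k ∧ v = y) ∨ (v = b k ∧ u = y) := by
    intro u v huv
    obtain ⟨i, hi⟩ := hM.edge_cover s(u, v) (G.mem_edgeSet.mpr huv)
    by_cases hii : i = i0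
    · subst hii
      rw [hedg1] at hi
      simp only [List.mem_singleton, Sym2.eq_iff] at hi
      tauto
    · obtain ⟨k, rfl⟩ := hσsurj i hii
      rw [hedg k] at hi
      simp only [List.mem_cons, List.mem_singleton, List.not_mem_nil,
        or_false, Sym2.eq_iff] at hi
      refine Or.inr (Or.inr ⟨k, ?_⟩)
      tauto
  -- the bijection with `Fin 8`
  set g : Fin 8 → V := ![x, y, a 0, b 0, a 1, b 1, a 2, b 2] with hg
  set f : V → Fin 8 := fun v =>
    if v = x then 0 else if v = y then 1 else if v = a 0 then 2 else
    if v = b 0 then 3 else if v = a 1 then 4 else if v = b 1 then 5 else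
    if v = a 2 then 6 else 7 with hfdef
  have hfx : f x = 0 := by simp [hfdef]
  have hfy : f y = 1 := by simp [hfdef, Ne.symm hxy]
  have hfa0 : f (a 0) = 2 := by
    simp [hfdef, fun k => Ne.symm (hxa' k), hay]
  have hfb0 : f (b 0) = 3 := by
    simp [hfdef, fun k => Ne.symm (hxb' k), hby', fun k => Ne.symm (hab' k)]
  have hfa1 : f (a 1) = 4 := by
    simp [hfdef, fun k => Ne.symm (hxa' k), hay, (hcross 1 0 (by decide)).1,
      (hcross 1 0 (by decide)).2.1]
  have hfb1 : f (b 1) = 5 := by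
    simp [hfdef, fun k => Ne.symm (hxb' k), hby', fun k => Ne.symm (hab' k),
      (hcross 1 0 (by decide)).2.2.1, (hcross 1 0 (by decide)).2.2.2]
  have hfa2 : f (a 2) = 6 := by
    simp [hfdef, fun k => Ne.symm (hxa' k), hay, (hcross 2 0 (by decide)).1,
      (hcross 2 0 (by decide)).2.1, (hcross 2 1 (by decide)).1,
      (hcross 2 1 (by decide)).2.1]
  have hfb2 : f (b 2) = 7 := by
    simp [hfdef, fun k => Ne.symm (hxb' k), hby', fun k => Ne.symm (hab' k),
      (hcross 2 0 (by decide)).2.2.1, (hcross 2 0 (by decide)).2.2.2,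
      (hcross 2 1 (by decide)).2.2.1, (hcross 2 1 (by decide)).2.2.2]
  have hfA : ∀ k : Fin 3, f (a k) = ![2, 4, 6] k := by
    intro k
    fin_cases k
    · exact hfa0
    · exact hfa1
    · exact hfa2
  have hfB : ∀ k : Fin 3, f (b k) = ![3, 5, 7] k := by
    intro k
    fin_cases k
    · exact hfb0
    · exact hfb1
    · exact hfb2
  have e0 : g (f x) = x := by rw [hfx]; rfl
  have e1 : g (f y) = y := by rw [hfy]; rfl
  have e2 : g (f (a 0)) = a 0 := by rw [hfa0]; rfl
  have e3 : g (f (b 0)) = b 0 := by rw [hfb0]; rfl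
  have e4 : g (f (a 1)) = a 1 := by rw [hfa1]; rfl
  have e5 : g (f (b 1)) = b 1 := by rw [hfb1]; rfl
  have e6 : g (f (a 2)) = a 2 := by rw [hfa2]; rfl
  have e7 : g (f (b 2)) = b 2 := by rw [hfb2]; rfl
  have hgf : ∀ v, g (f v) = v := by
    intro v
    rcases hcover v with rfl | rfl | ⟨k, rfl | rfl⟩
    · exact e0
    · exact e1
    · fin_cases k
      · exact e2
      · exact e4
      · exact e6
    · fin_cases k
      · exact e3
      · exact e5
      · exact e7
  have hfg : ∀ i : Fin 8, f (g i) = i := by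
    intro i
    fin_cases i
    · exact hfx
    · exact hfy
    · exact hfa0
    · exact hfb0
    · exact hfa1
    · exact hfb1
    · exact hfa2
    · exact hfb2
  set e : V ≃ Fin 8 := ⟨f, g, hgf, hfg⟩ with he
  -- adjacency correspondence
  have hGH : ∀ u v : V, G.Adj u v ↔ B3.Adj (f u) (f v) := by
    intro u v
    constructor
    · intro huv
      rcases hAdj u v huv with ⟨rfl, rfl⟩ | ⟨rfl, rfl⟩ |
        ⟨k, ⟨rfl, rfl⟩ | ⟨rfl, rfl⟩ | ⟨rfl, rfl⟩ | ⟨rfl, rfl⟩ | ⟨rfl, rfl⟩ | ⟨rfl, rfl⟩⟩ <;>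
        simp only [hfx, hfy, hfA, hfB] <;>
        first
          | decide
          | (fin_cases k <;> decide)
    · intro huv
      rcases hcover u with rfl | rfl | ⟨k, rfl | rfl⟩ <;>
        rcases hcover v with rfl | rfl | ⟨l, rfl | rfl⟩ <;>
        simp only [hfx, hfy, hfA, hfB] at huv <;>
        first
          | exact absurd huv (by decide)
          | (fin_cases k <;> fin_cases l <;>
              first
                | exact absurd huv (by decide)
                | exact hxyadj | exact hxyadj.symm
                | exact hxa _ | exact (hxa _).symm
                | exact hab _ | exact (hab _).symm
                | exact hby _ | exact (hby _).symm)
          | (fin_cases k <;>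
              first
                | exact absurd huv (by decide)
                | exact hxyadj | exact hxyadj.symm
                | exact hxa _ | exact (hxa _).symm
                | exact hab _ | exact (hab _).symm
                | exact hby _ | exact (hby _).symm)
          | (fin_cases l <;>
              first
                | exact absurd huv (by decide)
                | exact hxyadj | exact hxyadj.symm
                | exact hxa _ | exact (hxa _).symm
                | exact hab _ | exact (hab _).symm
                | exact hby _ | exact (hby _).symm)
          | exact hxyadj | exact hxyadj.symm
          | exact hxa _ | exact (hxa _).symm
          | exact hab _ | exact (hab _).symm
          | exact hby _ | exact (hby _).symm
  -- transfer
  have hset : {k | KWordRepresentable G k} = {k | KWordRepresentable B3 k} := by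
    ext k
    constructor
    · exact kwr_map e G B3 (by intro u v; exact hGH u v) k
    · refine kwr_map e.symm B3 G ?_ k
      intro u v
      rw [hGH (e.symm u) (e.symm v)]
      have h1 : f (e.symm u) = u := e.apply_symm_apply u
      have h2 : f (e.symm v) = v := e.apply_symm_apply v
      rw [h1, h2]
  show sInf {k | KWordRepresentable G k} = 3
  rw [hset]
  exact B3_sInf
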